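/- arXiv:2003.07439 — 5 statements merged into one kernel-verified Lean document; each statement's English description precedes it below -/
import Mathlib

section
/- Let K be a field of characteristic zero and let C ∈ K[x₁,…,x_{n+1}] be a non-constant homogeneous polynomial that is closed, i.e. C cannot be written as α·c^k with α ∈ K, c ∈ K[x₁,…,x_{n+1}] non-constant, and k ≥ 2. Then for every λ ∈ K with λ ≠ 0, the polynomial C − λ is irreducible in K[x₁,…,x_{n+1}]. -/
/-! If `C - λ = F * G` with non-units `F`, `G`, substitute `x ↦ t • x`: over the fraction field
`L` of `K[x]` this factors `C t^d - λ`, so `X^d - u` with `u = λ / C` has a factor of degree `a`,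
`0 < a < d`. The product `z` of its roots lies in `L` and `z^d = u^a`, so Bézout for `a, d` gives
`u = ω * w^(d / gcd a d)` with `ω` a root of unity. As `K[x]` is integrally closed with constant
units, `ω` is a constant and `C` is a constant times a `(d / gcd a d)`-th power, and
`d / gcd a d ≥ 2` because `gcd a d ≤ a < d`. -/

open MvPolynomial

/-- A polynomial is *closed* if it cannot be written as `α • c ^ k` with
`c` non-constant and `k ≥ 2`. -/
def IsClosedPoly {K : Type*} [CommRing K] {σ : Type*} (P : MvPolynomial σ K) : Prop :=
  ¬ ∃ (α : K) (c : MvPolynomial σ K) (k : ℕ), 2 ≤ k ∧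
      c ∉ Set.range (MvPolynomial.C : K → MvPolynomial σ K) ∧
      P = MvPolynomial.C α * c ^ k

open scoped Polynomial

theorem exists_eq_mul_pow_div_gcd_of_pow_eq_pow {L : Type*} [Field L] {u z : L} {a d : ℕ}
    (hu : u ≠ 0) (hd : 0 < d) (h : z ^ d = u ^ a) :
    ∃ ω w : L, ω ^ Nat.gcd a d = 1 ∧ u = ω * w ^ (d / Nat.gcd a d) := by
  set g := Nat.gcd a d
  -- Bézout: `u ^ gcd a d = u ^ (a * x + d * y) = (z ^ x * u ^ y) ^ d`
  set v := z ^ Nat.gcdA a d * u ^ Nat.gcdB a d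
  have hv : v ^ d = u ^ g := by
    have hbez : (g : ℤ) = a * Nat.gcdA a d + d * Nat.gcdB a d := Nat.gcd_eq_gcd_ab a d
    calc v ^ d = (z ^ d) ^ Nat.gcdA a d * (u ^ d) ^ Nat.gcdB a d := by
          rw [mul_pow, ← zpow_natCast, ← zpow_natCast, ← zpow_natCast, ← zpow_natCast,
            ← zpow_mul, ← zpow_mul, ← zpow_mul, ← zpow_mul, mul_comm (d : ℤ), mul_comm (d : ℤ)]
      _ = u ^ g := by
          rw [h, ← zpow_natCast, ← zpow_natCast, ← zpow_natCast, ← zpow_mul, ← zpow_mul,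
            ← zpow_add₀ hu, hbez]
  have hg : 0 < g := Nat.gcd_pos_of_pos_right a hd
  have hv0 : v ≠ 0 := fun h0 => pow_ne_zero g hu (by rw [← hv, h0, zero_pow hd.ne'])
  refine ⟨u / v ^ (d / g), v, ?_, by rw [div_mul_cancel₀ _ (pow_ne_zero _ hv0)]⟩
  rw [div_pow, ← pow_mul, Nat.div_mul_cancel (Nat.gcd_dvd_right a d), hv,
    div_self (pow_ne_zero _ hu)]

namespace Polynomial

theorem exists_pow_eq_pow_natDegree_of_dvd_X_pow_sub_C {L : Type*} [Field L]
    {f : L[X]} {u : L} {d : ℕ} (hf : f ≠ 0) (hdvd : f ∣ X ^ d - C u) :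
    ∃ z : L, z ^ d = u ^ f.natDegree := by
  set ι := algebraMap L (AlgebraicClosure L)
  set fM := f.map ι
  have hsplit : fM.Splits := IsAlgClosed.splits _
  have hfM : fM ≠ 0 := (Polynomial.map_ne_zero_iff ι.injective).mpr hf
  have hroots : ∀ ρ ∈ fM.roots, ρ ^ d = ι u := fun ρ hρ => by
    have := eval_eq_zero_of_dvd_of_eval_eq_zero (Polynomial.map_dvd ι hdvd)
      ((mem_roots hfM).mp hρ)
    simpa [sub_eq_zero] using this
  -- `z` is the product of the roots of `f`, each of which is a `d`-th root of `u`
  refine ⟨(-1) ^ f.natDegree * f.coeff 0 / f.leadingCoeff, ι.injective ?_⟩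
  have hprod : ι ((-1) ^ f.natDegree * f.coeff 0 / f.leadingCoeff) = fM.roots.prod := by
    have hlc : ι f.leadingCoeff ≠ 0 :=
      (map_ne_zero_iff _ ι.injective).mpr (leadingCoeff_ne_zero.mpr hf)
    have h0 := hsplit.coeff_zero_eq_leadingCoeff_mul_prod_roots
    rw [coeff_map, natDegree_map, leadingCoeff_map] at h0
    rw [map_div₀, map_mul, h0, map_pow, map_neg, map_one, ← mul_assoc, ← mul_assoc, ← pow_add,
      ← two_mul, pow_mul, neg_one_sq, one_pow, one_mul, mul_div_cancel_left₀ _ hlc]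
  rw [map_pow, hprod, map_pow, ← Multiset.map_id' fM.roots, ← Multiset.prod_map_pow,
    Multiset.map_congr rfl hroots, Multiset.map_const', Multiset.prod_replicate,
    ← hsplit.natDegree_eq_card_roots, natDegree_map]

end Polynomial

namespace MvPolynomial

section scalingHom

variable {σ R : Type*} [CommSemiring R]

/-- The substitution `x ↦ t • x`: the homogeneous component of degree `i` of `P` becomes the
coefficient of `t ^ i`. -/
noncomputable def scalingHom : MvPolynomial σ R →ₐ[R] (MvPolynomial σ R)[X] :=
  aeval fun i => Polynomial.C (X i) * Polynomial.X

theorem scalingHom_C (r : R) : scalingHom (C r : MvPolynomial σ R) = Polynomial.C (C r) := by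
  simp [scalingHom, Polynomial.algebraMap_apply]

theorem scalingHom_monomial (s : σ →₀ ℕ) (r : R) :
    scalingHom (monomial s r) = Polynomial.C (monomial s r) * Polynomial.X ^ s.degree := by
  classical
  simp only [scalingHom, aeval_monomial, Polynomial.algebraMap_apply, algebraMap_eq, Finsupp.prod,
    mul_pow, ← Polynomial.C_pow]
  rw [Finset.prod_mul_distrib, ← map_prod, Finset.prod_pow_eq_pow_sum, monomial_eq, Finsupp.prod,
    map_mul, map_prod, Finsupp.degree_apply]
  simp_rw [map_pow]
  ring

theorem IsHomogeneous.scalingHom_eq {P : MvPolynomial σ R} {d : ℕ} (hP : P.IsHomogeneous d) :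
    scalingHom P = Polynomial.C P * Polynomial.X ^ d := by
  conv_lhs => rw [P.as_sum]
  conv_rhs => rw [P.as_sum]
  rw [map_sum, map_sum, Finset.sum_mul]
  refine Finset.sum_congr rfl fun s hs => ?_
  rw [scalingHom_monomial, Finsupp.degree_eq_weight_one]
  congr 2
  exact hP (mem_support_iff.mp hs)

theorem eval_one_scalingHom (P : MvPolynomial σ R) : (scalingHom P).eval 1 = P := by
  induction P using MvPolynomial.induction_on with
  | C r => simp [scalingHom, Polynomial.algebraMap_apply]
  | add p q hp hq => simp only [map_add, Polynomial.eval_add, hp, hq]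
  | mul_X p i h =>
    rw [map_mul, Polynomial.eval_mul, h]
    simp [scalingHom]

theorem eval_zero_scalingHom (P : MvPolynomial σ R) :
    (scalingHom P).eval 0 = C (constantCoeff P) := by
  induction P using MvPolynomial.induction_on with
  | C r => simp [scalingHom, Polynomial.algebraMap_apply]
  | add p q hp hq => simp only [map_add, Polynomial.eval_add, hp, hq]
  | mul_X p i h => simp [scalingHom]

theorem eq_C_of_natDegree_scalingHom_eq_zero {P : MvPolynomial σ R}
    (h : (scalingHom P).natDegree = 0) : P = C (constantCoeff P) := by
  have hC := Polynomial.eq_C_coeff_zero_iff_natDegree_eq_zero.mpr h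
  rw [← eval_zero_scalingHom, hC, Polynomial.eval_C]
  conv_lhs => rw [← eval_one_scalingHom P, hC, Polynomial.eval_C]

theorem natDegree_scalingHom_pos {K : Type*} [Field K] {P : MvPolynomial σ K} (hP : P ≠ 0)
    (hu : ¬IsUnit P) : 0 < (scalingHom P).natDegree := by
  refine Nat.pos_of_ne_zero fun h => hu ?_
  have hPC := eq_C_of_natDegree_scalingHom_eq_zero h
  rw [hPC] at hP ⊢
  exact (isUnit_iff_ne_zero.mpr (by simpa using hP)).map C

end scalingHom

section FractionField

variable {σ K L : Type*} [Field K] [Field L] [Algebra (MvPolynomial σ K) L]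
  [IsFractionRing (MvPolynomial σ K) L]

theorem exists_pow_eq_pow_of_sub_C_eq_mul {P F G : MvPolynomial σ K} {d : ℕ} {c : K}
    (hP : P.IsHomogeneous d) (hd : 0 < d) (hP0 : P ≠ 0) (hFG : P - C c = F * G)
    (hF : ¬IsUnit F) (hG : ¬IsUnit G) :
    ∃ (z : L) (a : ℕ), 0 < a ∧ a < d ∧
      z ^ d = (algebraMap (MvPolynomial σ K) L (C c) / algebraMap _ L P) ^ a := by
  set φ := algebraMap (MvPolynomial σ K) L
  have hφ : Function.Injective φ := IsFractionRing.injective _ _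
  have hφP : φ P ≠ 0 := (map_ne_zero_iff φ hφ).mpr hP0
  set u := φ (C c) / φ P
  set f := (scalingHom F).map φ
  set g := (scalingHom G).map φ
  have hfg : f * g = Polynomial.C (φ P) * (Polynomial.X ^ d - Polynomial.C u) := by
    rw [← Polynomial.map_mul, ← map_mul, ← hFG, map_sub, hP.scalingHom_eq, scalingHom_C]
    simp [u, mul_sub, ← Polynomial.C_mul, mul_div_cancel₀ _ hφP]
  have hdeg : ∀ {H : MvPolynomial σ K}, H ≠ 0 → ¬IsUnit H →
      0 < ((scalingHom H).map φ).natDegree := fun hH0 hH => by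
    rw [Polynomial.natDegree_map_eq_of_injective hφ]
    exact natDegree_scalingHom_pos hH0 hH
  have hfg0 : f * g ≠ 0 :=
    hfg ▸ mul_ne_zero (Polynomial.C_ne_zero.mpr hφP) (Polynomial.X_pow_sub_C_ne_zero hd u)
  have hF0 : F ≠ 0 := by rintro rfl; simp [f] at hfg0
  have hG0 : G ≠ 0 := by rintro rfl; simp [g] at hfg0
  have hf : 0 < f.natDegree := hdeg hF0 hF
  have hg : 0 < g.natDegree := hdeg hG0 hG
  have hsum : f.natDegree + g.natDegree = d := by
    rw [← Polynomial.natDegree_mul (left_ne_zero_of_mul hfg0) (right_ne_zero_of_mul hfg0), hfg,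
      Polynomial.natDegree_C_mul hφP, Polynomial.natDegree_X_pow_sub_C]
  have hdvd : f ∣ Polynomial.X ^ d - Polynomial.C u :=
    (Polynomial.isUnit_C.mpr (isUnit_iff_ne_zero.mpr hφP)).dvd_mul_left.mp (Dvd.intro g hfg)
  obtain ⟨z, hz⟩ :=
    Polynomial.exists_pow_eq_pow_natDegree_of_dvd_X_pow_sub_C (left_ne_zero_of_mul hfg0) hdvd
  exact ⟨z, f.natDegree, hf, by omega, hz⟩

theorem exists_algebraMap_C_eq_of_pow_eq_one {ω : L} {g : ℕ} (hg : 0 < g) (hω : ω ^ g = 1) :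
    ∃ β : K, algebraMap (MvPolynomial σ K) L (C β) = ω := by
  obtain ⟨r, hr⟩ := IsIntegrallyClosed.exists_algebraMap_eq_of_isIntegral_pow
    (R := MvPolynomial σ K) hg (hω ▸ isIntegral_one)
  have hr1 : r ^ g = 1 :=
    IsFractionRing.injective (MvPolynomial σ K) L (by rw [map_pow, hr, hω, map_one])
  obtain ⟨β, -, rfl⟩ := isUnit_iff_eq_C_of_isReduced.mp (IsUnit.of_pow_eq_one hr1 hg.ne')
  exact ⟨β, hr⟩

theorem exists_eq_C_mul_pow_of_div_eq_mul_pow {P : MvPolynomial σ K} {c : K} {ω w : L} {g k : ℕ}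
    (hP0 : P ≠ 0) (hc : c ≠ 0) (hg : 0 < g) (hk : 0 < k) (hω : ω ^ g = 1)
    (h : algebraMap (MvPolynomial σ K) L (C c) / algebraMap _ L P = ω * w ^ k) :
    ∃ (α : K) (q : MvPolynomial σ K), P = C α * q ^ k := by
  obtain ⟨β, rfl⟩ := exists_algebraMap_C_eq_of_pow_eq_one (σ := σ) (K := K) hg hω
  set φ := algebraMap (MvPolynomial σ K) L
  have hφ : Function.Injective φ := IsFractionRing.injective _ _
  have hβ : β ≠ 0 := by rintro rfl; simp [hg.ne'] at hω
  have hφP : φ P ≠ 0 := (map_ne_zero_iff φ hφ).mpr hP0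
  have hφc : ∀ {x : K}, x ≠ 0 → φ (C x) ≠ 0 :=
    fun hx => (map_ne_zero_iff φ hφ).mpr (by simpa)
  have hw : w ≠ 0 := by
    rintro rfl
    simp [hk.ne', hφP, hφc hc] at h
  have hpow : w⁻¹ ^ k = φ (C (β / c) * P) := by
    have hdiv : φ (C (β / c)) = φ (C β) / φ (C c) := map_div₀ (φ.comp C) β c
    have := hφc hc
    rw [map_mul, hdiv, inv_pow]
    field_simp
    field_simp at h
    linear_combination h
  obtain ⟨q, hq⟩ := IsIntegrallyClosed.exists_algebraMap_eq_of_isIntegral_pow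
    (R := MvPolynomial σ K) hk (hpow ▸ isIntegral_algebraMap)
  refine ⟨c / β, q, hφ ?_⟩
  rw [map_mul, map_pow, hq, hpow, ← map_mul, ← mul_assoc, ← map_mul]
  field_simp
  simp

end FractionField

end MvPolynomial

theorem IsClosedPoly.ne_zero {σ K : Type*} [CommRing K] [Nontrivial K] [Nonempty σ]
    {P : MvPolynomial σ K} (hP : IsClosedPoly P) : P ≠ 0 := by
  rintro rfl
  obtain ⟨i⟩ := ‹Nonempty σ›
  refine hP ⟨0, X i, 2, le_rfl, ?_, by simp⟩
  rintro ⟨a, ha⟩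
  simpa using congrArg totalDegree ha

theorem stmt7_general {K : Type*} [Field K] (n : ℕ)
    (Cp : MvPolynomial (Fin (n + 1)) K) (d : ℕ) (hd : 1 ≤ d)
    (hhom : Cp.IsHomogeneous d) (hclosed : IsClosedPoly Cp)
    (lam : K) (hlam : lam ≠ 0) :
    Irreducible (Cp - MvPolynomial.C lam) := by
  have hCp0 : Cp ≠ 0 := hclosed.ne_zero
  have hCp_ne_C : ∀ γ : K, Cp ≠ C γ := by
    rintro γ rfl
    have := hhom.totalDegree hCp0
    rw [totalDegree_C] at this
    omega
  refine ⟨fun hunit => ?_, fun F G hFG => ?_⟩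
  · obtain ⟨r, -, hr⟩ := isUnit_iff_eq_C_of_isReduced.mp hunit
    exact hCp_ne_C (r + lam) (by rw [map_add, ← hr, sub_add_cancel])
  by_contra! ⟨hF, hG⟩
  obtain ⟨z, a, ha, had, hz⟩ := exists_pow_eq_pow_of_sub_C_eq_mul
    (L := FractionRing (MvPolynomial (Fin (n + 1)) K)) hhom hd hCp0 hFG hF hG
  have hg : 0 < a.gcd d := Nat.gcd_pos_of_pos_left d ha
  have hk : 2 ≤ d / a.gcd d := by
    have := Nat.gcd_le_left d ha
    have := Nat.div_mul_cancel (Nat.gcd_dvd_right a d)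
    nlinarith
  obtain ⟨ω, w, hω, hu⟩ := exists_eq_mul_pow_div_gcd_of_pow_eq_pow
    (div_ne_zero (by simpa) (by simpa)) hd hz
  obtain ⟨α, q, hq⟩ := exists_eq_C_mul_pow_of_div_eq_mul_pow hCp0 hlam hg (by omega) hω hu
  refine hclosed ⟨α, q, d / a.gcd d, hk, ?_, hq⟩
  rintro ⟨γ, rfl⟩
  exact hCp_ne_C (α * γ ^ (d / a.gcd d)) (by rw [hq, map_mul, map_pow])

/-- If `C ∈ K[x₁,…,x_{n+1}]` (with `n ≥ 1`) is a non-constant homogeneous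
closed polynomial and `λ ≠ 0`, then `C - λ` is irreducible. -/
theorem stmt7 {K : Type*} [Field K] [CharZero K] (n : ℕ) (hn : 1 ≤ n)
    (Cp : MvPolynomial (Fin (n + 1)) K) (d : ℕ) (hd : 1 ≤ d)
    (hhom : Cp.IsHomogeneous d) (hclosed : IsClosedPoly Cp)
    (lam : K) (hlam : lam ≠ 0) :
    Irreducible (Cp - MvPolynomial.C lam) :=
  stmt7_general n Cp d hd hhom hclosed lam hlam
end

section
/- For every C ∈ K[x₁,…,x_{n+1}] the n-Lie-Poisson algebra P_C is strong; that is, for all u₁,…,u_{n−1}, v₁,…,v_{n+1} ∈ K[x₁,…,x_{n+1}] one has Σ_{i=1}^{n+1} (−1)^i · J(u₁,…,u_{n−1}, v_i, C) · J(v₁,…,v_{i−1}, v_{i+1},…,v_{n+1}, C) = 0. -/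
open MvPolynomial Finset

/-- The Jacobian of `N` polynomials in `N` variables. -/
noncomputable def jac {K : Type*} [CommRing K] {N : ℕ}
    (f : Fin N → MvPolynomial (Fin N) K) : MvPolynomial (Fin N) K :=
  (Matrix.of fun i j => pderiv j (f i)).det

lemma snoc_succAbove_castSucc {α : Type*} {n : ℕ} (v : Fin (n + 1) → α) (C : α)
    (i : Fin (n + 1)) (j : Fin (n + 1)) :
    (Fin.snoc v C : Fin (n + 2) → α) (i.castSucc.succAbove j) =
      (Fin.snoc (fun t => v (i.succAbove t)) C : Fin (n + 1) → α) j := by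
  induction j using Fin.lastCases with
  | last =>
      rw [Fin.succAbove_of_le_castSucc _ _
        (Fin.castSucc_le_castSucc_iff.2 (Fin.le_last i))]
      rw [Fin.succ_last, Fin.snoc_last, Fin.snoc_last]
  | cast j' =>
      rw [Fin.castSucc_succAbove_castSucc, Fin.snoc_castSucc, Fin.snoc_castSucc]

lemma snoc_snoc_apply_ne {α : Type*} {n : ℕ} (u : Fin n → α) (g g' C : α)
    {q : Fin (n + 2)} (hq : q ≠ (Fin.last n).castSucc) :
    (Fin.snoc (Fin.snoc u g) C : Fin (n + 2) → α) q =
      (Fin.snoc (Fin.snoc u g') C : Fin (n + 2) → α) q := by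
  induction q using Fin.lastCases with
  | last => simp
  | cast q' =>
      induction q' using Fin.lastCases with
      | last => exact absurd rfl hq
      | cast q'' => simp

lemma jac_update {K : Type*} [CommRing K] {n : ℕ}
    (w : Fin (n + 1) → MvPolynomial (Fin (n + 1)) K) (p : Fin (n + 1)) :
    ∃ c : Fin (n + 1) → MvPolynomial (Fin (n + 1)) K,
      ∀ g, jac (Function.update w p g) = ∑ k, pderiv k g * c k := by
  refine ⟨fun k => (-1) ^ ((p : ℕ) + (k : ℕ)) *
    (Matrix.of fun (i j : Fin n) => pderiv (k.succAbove j) (w (p.succAbove i))).det, fun g => ?_⟩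
  rw [jac, Matrix.det_succ_row _ p]
  refine Finset.sum_congr rfl fun k _ => ?_
  have h1 : (Matrix.of fun i j => pderiv j (Function.update w p g i)) p k = pderiv k g := by
    simp
  have h2 : ((Matrix.of fun i j => pderiv j (Function.update w p g i)).submatrix
      p.succAbove k.succAbove) =
      Matrix.of fun (i j : Fin n) => pderiv (k.succAbove j) (w (p.succAbove i)) := by
    ext i j
    simp [Function.update_of_ne (Fin.succAbove_ne p i)]
  rw [h1, h2]
  ring

lemma key_sum {K : Type*} [CommRing K] {n : ℕ} (v : Fin (n + 1) → MvPolynomial (Fin (n + 1)) K)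
    (C : MvPolynomial (Fin (n + 1)) K) (k : Fin (n + 1)) :
    ∑ i : Fin (n + 1), (-1 : MvPolynomial (Fin (n + 1)) K) ^ ((i : ℕ) + 1) * pderiv k (v i) *
        jac (Fin.snoc (fun j : Fin n => v (i.succAbove j)) C)
      = (-1) ^ (n + 1) * pderiv k C * jac v := by
  set W : Fin (n + 2) → MvPolynomial (Fin (n + 1)) K := Fin.snoc v C with hW
  set A : Matrix (Fin (n + 2)) (Fin (n + 2)) (MvPolynomial (Fin (n + 1)) K) :=
    Matrix.of fun i j => pderiv ((Fin.cases k id : Fin (n + 2) → Fin (n + 1)) j) (W i) with hA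
  have h0 : A.det = 0 := by
    apply Matrix.det_zero_of_column_eq (show (0 : Fin (n + 2)) ≠ k.succ from
      (Fin.succ_ne_zero k).symm)
    intro i
    simp [hA]
  rw [Matrix.det_succ_column_zero, Fin.sum_univ_castSucc] at h0
  have hterm : ∀ i : Fin (n + 1),
      (-1 : MvPolynomial (Fin (n + 1)) K) ^ ((i.castSucc : ℕ)) * A i.castSucc 0 *
        (A.submatrix i.castSucc.succAbove Fin.succ).det
      = (-1) ^ ((i : ℕ)) * pderiv k (v i) *
        jac (Fin.snoc (fun j : Fin n => v (i.succAbove j)) C) := by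
    intro i
    have hA0 : A i.castSucc 0 = pderiv k (v i) := by simp [hA, hW]
    have hsub : A.submatrix i.castSucc.succAbove Fin.succ =
        Matrix.of fun (a b : Fin (n + 1)) =>
          pderiv b ((Fin.snoc (fun t => v (i.succAbove t)) C : Fin (n + 1) → _) a) := by
      refine Matrix.ext fun a b => ?_
      simp only [hA, Matrix.submatrix_apply, Matrix.of_apply, Fin.cases_succ, hW]
      rw [snoc_succAbove_castSucc]
      rfl
    rw [hA0, hsub, Fin.coe_castSucc]
    rfl
  have hlast : (-1 : MvPolynomial (Fin (n + 1)) K) ^ ((Fin.last (n + 1) : ℕ)) *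
      A (Fin.last (n + 1)) 0 * (A.submatrix (Fin.last (n + 1)).succAbove Fin.succ).det
      = (-1) ^ (n + 1) * pderiv k C * jac v := by
    have hA0 : A (Fin.last (n + 1)) 0 = pderiv k C := by simp [hA, hW]
    have hsub : A.submatrix (Fin.last (n + 1)).succAbove Fin.succ =
        Matrix.of fun (a b : Fin (n + 1)) => pderiv b (v a) := by
      ext a b
      simp [hA, hW, Matrix.submatrix_apply, Fin.succAbove_last]
    rw [hA0, hsub, Fin.val_last]
    rfl
  rw [Finset.sum_congr rfl (fun i _ => hterm i), hlast] at h0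
  have hgoal : ∑ i : Fin (n + 1), (-1 : MvPolynomial (Fin (n + 1)) K) ^ ((i : ℕ) + 1) *
      pderiv k (v i) * jac (Fin.snoc (fun j : Fin n => v (i.succAbove j)) C)
      = -∑ i : Fin (n + 1), (-1 : MvPolynomial (Fin (n + 1)) K) ^ ((i : ℕ)) *
      pderiv k (v i) * jac (Fin.snoc (fun j : Fin n => v (i.succAbove j)) C) := by
    rw [← Finset.sum_neg_distrib]
    exact Finset.sum_congr rfl fun i _ => by ring
  rw [hgoal]
  linear_combination -h0

/-- Here `n = m + 2 ≥ 2` and the polynomial ring has `n + 1 = m + 3` variables.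
For every `C`, the `n`-Lie-Poisson algebra `P_C` with bracket
`{f₁,…,fₙ} = J(f₁,…,fₙ,C)` is strong:
`Σᵢ (-1)ⁱ {u₁,…,u_{n-1},vᵢ}·{v₁,…,v̂ᵢ,…,v_{n+1}} = 0`. -/
theorem stmt9 {K : Type*} [Field K] [CharZero K] (m : ℕ)
    (Cp : MvPolynomial (Fin (m + 3)) K)
    (u : Fin (m + 1) → MvPolynomial (Fin (m + 3)) K)
    (v : Fin (m + 3) → MvPolynomial (Fin (m + 3)) K) :
    ∑ i : Fin (m + 3), (-1 : MvPolynomial (Fin (m + 3)) K) ^ ((i : ℕ) + 1) *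
        jac (Fin.snoc (Fin.snoc u (v i)) Cp) *
        jac (Fin.snoc (fun j : Fin (m + 2) => v (i.succAbove j)) Cp) = 0 := by
  classical
  obtain ⟨c, hc⟩ := jac_update (Fin.snoc (Fin.snoc u Cp) Cp) ((Fin.last (m + 1)).castSucc)
  have hupd : ∀ g, (Fin.snoc (Fin.snoc u g) Cp : Fin (m + 3) → MvPolynomial (Fin (m + 3)) K) =
      Function.update (Fin.snoc (Fin.snoc u Cp) Cp : Fin (m + 3) → MvPolynomial (Fin (m + 3)) K)
        ((Fin.last (m + 1)).castSucc) g := by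
    intro g
    funext q
    by_cases hq : q = (Fin.last (m + 1)).castSucc
    · subst hq
      rw [Function.update_self]
      simp
    · rw [Function.update_of_ne hq]
      exact snoc_snoc_apply_ne u g Cp Cp hq
  have hwzero : jac (Fin.snoc (Fin.snoc u Cp) Cp : Fin (m + 3) → _) = 0 := by
    unfold jac
    apply Matrix.det_zero_of_row_eq
      (i := (Fin.last (m + 1)).castSucc) (j := Fin.last (m + 2))
    · exact Fin.ne_of_lt (Fin.castSucc_lt_last _)
    · funext j
      simp
  have hzero : ∑ k : Fin (m + 3), pderiv k Cp * c k = 0 := by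
    rw [← hc Cp, ← hupd Cp]
    exact hwzero
  calc ∑ i : Fin (m + 3), (-1 : MvPolynomial (Fin (m + 3)) K) ^ ((i : ℕ) + 1) *
        jac (Fin.snoc (Fin.snoc u (v i)) Cp) *
        jac (Fin.snoc (fun j : Fin (m + 2) => v (i.succAbove j)) Cp)
      = ∑ i : Fin (m + 3), ∑ k : Fin (m + 3), c k *
          ((-1) ^ ((i : ℕ) + 1) * pderiv k (v i) *
            jac (Fin.snoc (fun j : Fin (m + 2) => v (i.succAbove j)) Cp)) := by
        refine Finset.sum_congr rfl fun i _ => ?_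
        rw [hupd (v i), hc (v i), Finset.mul_sum, Finset.sum_mul]
        exact Finset.sum_congr rfl fun k _ => by ring
    _ = ∑ k : Fin (m + 3), c k * ∑ i : Fin (m + 3),
          ((-1) ^ ((i : ℕ) + 1) * pderiv k (v i) *
            jac (Fin.snoc (fun j : Fin (m + 2) => v (i.succAbove j)) Cp)) := by
        rw [Finset.sum_comm]
        refine Finset.sum_congr rfl fun k _ => ?_
        rw [Finset.mul_sum]
    _ = ∑ k : Fin (m + 3), c k * ((-1) ^ (m + 3) * pderiv k Cp * jac v) := by
        refine Finset.sum_congr rfl fun k _ => ?_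
        rw [key_sum]
    _ = (-1) ^ (m + 3) * jac v * ∑ k : Fin (m + 3), pderiv k Cp * c k := by
        rw [Finset.mul_sum]
        exact Finset.sum_congr rfl fun k _ => by ring
    _ = 0 := by rw [hzero, mul_zero]
end

section
/- Let C ∈ K[x₁,…,x_{n+1}] be homogeneous of degree m ≥ 1, let λ ∈ K with λ ≠ 0, and let 0 ≤ r ≤ m−1. Suppose f ∈ K[x₁,…,x_{n+1}] is a nonzero polynomial all of whose nonzero homogeneous components have degree congruent to r modulo m, and f ∉ (C−λ). Then there exists a homogeneous polynomial f' ∈ K[x₁,…,x_{n+1}] of degree equal to deg f (so in particular deg f' ≡ r mod m) such that f − f' ∈ (C−λ). -/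
/-!
Since `C ≡ λ` modulo `(C - λ)` and `λ` is invertible, each homogeneous component `f_i` of `f` is
congruent to `λ^{-k} C^k f_i` for every `k`. Choosing `k = (deg f - i) / m`, which is exact because
`i ≡ deg f (mod m)`, makes every term homogeneous of degree `deg f`, and their sum is the required
`f'`; it is nonzero because `f ∉ (C - λ)`.
-/

open MvPolynomial

theorem Ideal.sub_mul_pow_mul_mem_span_sub {R : Type*} [CommRing R] {x y u : R} (hu : u * y = 1)
    (k : ℕ) (p : R) : p - u ^ k * x ^ k * p ∈ Ideal.span {x - y} := by
  obtain ⟨c, hc⟩ := sub_dvd_pow_sub_pow x y k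
  refine Ideal.mem_span_singleton.2 ⟨-(u ^ k * c * p), ?_⟩
  have hu' : u ^ k * y ^ k = 1 := by rw [← mul_pow, hu, one_pow]
  linear_combination (-(u ^ k * p)) * hc - p * hu'

namespace MvPolynomial

variable {σ K : Type*}

theorem homogeneousComponent_totalDegree_ne_zero [CommSemiring K] {f : MvPolynomial σ K}
    (hf : f ≠ 0) : homogeneousComponent f.totalDegree f ≠ 0 := by
  classical
  obtain ⟨d, hd, hdeg⟩ := f.support.exists_mem_eq_sup (support_nonempty.mpr hf)
    fun s : σ →₀ ℕ => s.sum fun _ e => e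
  intro h
  have hcoeff : coeff d (homogeneousComponent f.totalDegree f) = coeff d f := by
    rw [coeff_homogeneousComponent, if_pos]
    exact hdeg.symm
  rw [h, coeff_zero] at hcoeff
  exact mem_support_iff.mp hd hcoeff.symm

theorem IsHomogeneous.C_mul_pow_mul [CommSemiring K] {c p : MvPolynomial σ K} {m i D : ℕ}
    (hc : c.IsHomogeneous m) (hp : p.IsHomogeneous i) (hiD : i ≤ D) (hdvd : m ∣ D - i) (a : K) :
    (C a * c ^ ((D - i) / m) * p).IsHomogeneous D := by
  have hdeg : 0 + m * ((D - i) / m) + i = D := by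
    rw [Nat.mul_div_cancel' hdvd]
    omega
  simpa only [hdeg] using ((isHomogeneous_C σ a).mul (hc.pow ((D - i) / m))).mul hp

variable [Field K]

noncomputable def raiseToTotalDegree (c : MvPolynomial σ K) (lam : K) (m : ℕ)
    (f : MvPolynomial σ K) : MvPolynomial σ K :=
  ∑ i ∈ Finset.range (f.totalDegree + 1),
    C (lam⁻¹ ^ ((f.totalDegree - i) / m)) * c ^ ((f.totalDegree - i) / m) *
      homogeneousComponent i f

theorem sub_raiseToTotalDegree_mem_span (c : MvPolynomial σ K) {lam : K} (hlam : lam ≠ 0)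
    (m : ℕ) (f : MvPolynomial σ K) :
    f - raiseToTotalDegree c lam m f ∈ Ideal.span {c - C lam} := by
  have hu : C lam⁻¹ * C lam = (1 : MvPolynomial σ K) := by rw [← C_mul, inv_mul_cancel₀ hlam, C_1]
  nth_rewrite 1 [← sum_homogeneousComponent f]
  rw [raiseToTotalDegree, ← Finset.sum_sub_distrib]
  refine Ideal.sum_mem _ fun i _ => ?_
  rw [C_pow]
  exact Ideal.sub_mul_pow_mul_mem_span_sub hu _ _

theorem isHomogeneous_raiseToTotalDegree {c : MvPolynomial σ K} {m : ℕ} (hc : c.IsHomogeneous m)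
    (lam : K) {f : MvPolynomial σ K}
    (hf : ∀ d, homogeneousComponent d f ≠ 0 → d ≡ f.totalDegree [MOD m]) :
    (raiseToTotalDegree c lam m f).IsHomogeneous f.totalDegree := by
  refine IsHomogeneous.sum _ _ _ fun i hi => ?_
  have hiD : i ≤ f.totalDegree := Nat.lt_succ_iff.mp (Finset.mem_range.mp hi)
  by_cases h : homogeneousComponent i f = 0
  · rw [h, mul_zero]
    exact isHomogeneous_zero _ _ _
  · exact hc.C_mul_pow_mul (homogeneousComponent_isHomogeneous i f) hiD
      ((Nat.modEq_iff_dvd' hiD).mp (hf i h)) _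

end MvPolynomial

theorem stmt10_general {K : Type*} [Field K] (n : ℕ)
    (Cp : MvPolynomial (Fin (n + 1)) K) (m : ℕ)
    (hhom : Cp.IsHomogeneous m) (lam : K) (hlam : lam ≠ 0)
    (r : ℕ)
    (f : MvPolynomial (Fin (n + 1)) K) (hf0 : f ≠ 0)
    (hcomp : ∀ d : ℕ, homogeneousComponent d f ≠ 0 → d % m = r)
    (hfI : f ∉ Ideal.span {Cp - MvPolynomial.C lam}) :
    ∃ f' : MvPolynomial (Fin (n + 1)) K, f' ≠ 0 ∧
      f'.IsHomogeneous f.totalDegree ∧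
      f - f' ∈ Ideal.span {Cp - MvPolynomial.C lam} := by
  have htop : f.totalDegree % m = r := hcomp _ (homogeneousComponent_totalDegree_ne_zero hf0)
  have hsub := sub_raiseToTotalDegree_mem_span Cp hlam m f
  have hmod (d : ℕ) (hd : homogeneousComponent d f ≠ 0) : d ≡ f.totalDegree [MOD m] :=
    (hcomp d hd).trans htop.symm
  refine ⟨raiseToTotalDegree Cp lam m f, fun h => hfI ?_,
    isHomogeneous_raiseToTotalDegree hhom lam hmod, hsub⟩
  rwa [h, sub_zero] at hsub

/-- Let `C ∈ K[x₁,…,x_{n+1}]` be homogeneous of degree `m ≥ 1` and `λ ≠ 0`.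
If `f ≠ 0` is `m`-homogeneous of class `r` (all nonzero homogeneous components
of `f` have degree ≡ `r` mod `m`) and `f ∉ (C - λ)`, then there is a homogeneous
polynomial `f'` of degree `deg f` with `f - f' ∈ (C - λ)`. -/
theorem stmt10 {K : Type*} [Field K] [CharZero K] (n : ℕ)
    (Cp : MvPolynomial (Fin (n + 1)) K) (m : ℕ) (hm : 1 ≤ m)
    (hhom : Cp.IsHomogeneous m) (lam : K) (hlam : lam ≠ 0)
    (r : ℕ) (hr : r < m)
    (f : MvPolynomial (Fin (n + 1)) K) (hf0 : f ≠ 0)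
    (hcomp : ∀ d : ℕ, homogeneousComponent d f ≠ 0 → d % m = r)
    (hfI : f ∉ Ideal.span {Cp - MvPolynomial.C lam}) :
    ∃ f' : MvPolynomial (Fin (n + 1)) K, f' ≠ 0 ∧
      f'.IsHomogeneous f.totalDegree ∧
      f - f' ∈ Ideal.span {Cp - MvPolynomial.C lam} :=
  stmt10_general n Cp m hhom lam hlam r f hf0 hcomp hfI
end

section
/- Let K be a field of characteristic zero with algebraic closure K̄, and let C ∈ K[x₁,…,x_{n+1}] be a non-constant homogeneous polynomial. If there exist an integer k ≥ 2 and a polynomial c ∈ K̄[x₁,…,x_{n+1}] with C = c^k, then there exist α ∈ K and c' ∈ K[x₁,…,x_{n+1}] with C = α·(c')^k. Equivalently: if a non-constant homogeneous C ∈ K[x₁,…,x_{n+1}] is closed over K (not of the form α·c^k with α ∈ K, c non-constant, k ≥ 2), then C remains closed over K̄. -/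
/-!
Let `L = K̄`. Every `g ∈ Gal(L/K)` fixes `C`, so `g(c)ᵏ = cᵏ`, and since `L` is algebraically
closed this forces `g(c) = ζ_g · c` for a constant `ζ_g`. Dividing `c` by one of its nonzero
coefficients `a` kills the scalars: `a⁻¹ c` is Galois-invariant, hence has coefficients in `K`
(characteristic zero makes `L/K` Galois). Then `C = aᵏ (a⁻¹ c)ᵏ`, and comparing one
coefficient shows `aᵏ ∈ K`.
-/

open MvPolynomial

open Polynomial in
theorem exists_eq_algebraMap_mul_of_pow_eq_pow {L R : Type*} [Field L] [IsAlgClosed L]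
    [CommRing R] [IsDomain R] [Algebra L R] {k : ℕ} (hk : k ≠ 0) {x y : R}
    (h : x ^ k = y ^ k) : ∃ ζ : L, x = algebraMap L R ζ * y := by
  rcases eq_or_ne y 0 with rfl | hy
  · exact ⟨0, by simpa [hk] using h⟩
  let F := FractionRing R
  have hy' : algebraMap R F y ≠ 0 :=
    IsFractionRing.to_map_ne_zero_of_mem_nonZeroDivisors (mem_nonZeroDivisors_of_ne_zero hy)
  -- `x / y` is a `k`-th root of unity in `Frac R`, and all of those come from `L`.
  have hroot : ((Polynomial.X ^ k - Polynomial.C 1 : L[X]).map (algebraMap L F)).IsRoot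
      (algebraMap R F x / algebraMap R F y) := by
    have hpow : (algebraMap R F x / algebraMap R F y) ^ k = 1 := by
      rw [div_pow, ← map_pow, ← map_pow, h, div_self (by simpa using pow_ne_zero k hy')]
    simp [hpow]
  obtain ⟨ζ, hζ⟩ := (IsAlgClosed.splits _).mem_range_of_isRoot
    (X_pow_sub_C_ne_zero (Nat.pos_of_ne_zero hk) 1) hroot
  refine ⟨ζ, IsFractionRing.injective R F ?_⟩
  rw [map_mul, ← IsScalarTower.algebraMap_apply, hζ, div_mul_cancel₀ _ hy']

namespace MvPolynomial

variable {σ : Type*}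

theorem mem_range_map_of_forall_algEquiv_map_eq {K L : Type*} [Field K] [Field L] [Algebra K L]
    [IsGalois K L] {p : MvPolynomial σ L} (h : ∀ g : Gal(L/K), map (g : L →+* L) p = p) :
    p ∈ Set.range (map (algebraMap K L)) := by
  rw [mem_range_map_iff_coeffs_subset]
  intro a ha
  obtain ⟨d, -, rfl⟩ := mem_coeffs_iff.mp ha
  refine (InfiniteGalois.mem_range_algebraMap_iff_fixed _).mpr fun g => ?_
  simpa [coeff_map] using congrArg (coeff d) (h g)

theorem map_C_inv_coeff_mul_self {L : Type*} [Field L] {f : L →+* L} {c : MvPolynomial σ L}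
    {ζ : L} (hc : map f c = C ζ * c) {d : σ →₀ ℕ} (hd : coeff d c ≠ 0) :
    map f (C (coeff d c)⁻¹ * c) = C (coeff d c)⁻¹ * c := by
  have hfd : f (coeff d c) = ζ * coeff d c := by
    simpa only [coeff_map, coeff_C_mul] using congrArg (coeff d) hc
  have hζ : ζ ≠ 0 := left_ne_zero_of_mul (hfd ▸ (map_ne_zero f).mpr hd)
  rw [map_mul, map_C, hc, map_inv₀, hfd, ← mul_assoc, ← C_mul]
  congr 2
  field_simp

theorem exists_eq_C_mul_of_map_eq_C_mul_map {K L : Type*} [Field K] [Field L] {f : K →+* L}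
    {P Q : MvPolynomial σ K} (hQ : Q ≠ 0) {b : L} (h : map f P = C b * map f Q) :
    ∃ β : K, P = C β * Q := by
  obtain ⟨d, hd⟩ := ne_zero_iff.mp hQ
  have hb : b = f (coeff d P / coeff d Q) := by
    have := congrArg (coeff d) h
    simp only [coeff_map, coeff_C_mul] at this
    rw [map_div₀, this, mul_div_cancel_right₀ _ ((map_ne_zero f).mpr hd)]
  refine ⟨coeff d P / coeff d Q, map_injective f f.injective ?_⟩
  rw [h, map_mul, map_C, ← hb]

end MvPolynomial

theorem stmt15_general {K : Type*} [Field K] [CharZero K] (n : ℕ)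
    (Cp : MvPolynomial (Fin (n + 1)) K)
    (k : ℕ) (hk : 2 ≤ k)
    (c : MvPolynomial (Fin (n + 1)) (AlgebraicClosure K))
    (hc : MvPolynomial.map (algebraMap K (AlgebraicClosure K)) Cp = c ^ k) :
    ∃ (α : K) (c' : MvPolynomial (Fin (n + 1)) K),
      Cp = MvPolynomial.C α * c' ^ k := by
  set L := AlgebraicClosure K
  have hk0 : k ≠ 0 := by omega
  rcases eq_or_ne c 0 with rfl | hc0
  · exact ⟨0, 0, map_injective _ (algebraMap K L).injective (by simpa [hk0] using hc)⟩
  obtain ⟨d, hd⟩ := ne_zero_iff.mp hc0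
  have hconj (g : Gal(L/K)) : ∃ ζ : L, map (g : L →+* L) c = C ζ * c := by
    refine exists_eq_algebraMap_mul_of_pow_eq_pow hk0 ?_
    rw [← map_pow, ← hc, map_map]
    exact congrArg (map · Cp) (RingHom.ext g.commutes)
  obtain ⟨c', hc'⟩ := mem_range_map_of_forall_algEquiv_map_eq fun g =>
    (hconj g).elim fun _ hζ => map_C_inv_coeff_mul_self hζ hd
  set a := coeff d c
  have hc'0 : c' ≠ 0 := by
    rintro rfl
    simp [hd, hc0] at hc'
  have hca : c = C a * map (algebraMap K L) c' := by
    rw [hc', ← mul_assoc, ← C_mul, mul_inv_cancel₀ hd, C_1, one_mul]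
  have hCp : map (algebraMap K L) Cp = C (a ^ k) * map (algebraMap K L) (c' ^ k) := by
    rw [hc, hca, mul_pow, map_pow, map_pow]
  obtain ⟨α, hα⟩ := exists_eq_C_mul_of_map_eq_C_mul_map (pow_ne_zero k hc'0) hCp
  exact ⟨α, c', hα⟩

/-- Let `C ∈ K[x₁,…,x_{n+1}]` be a non-constant homogeneous polynomial over a
field `K` of characteristic zero with algebraic closure `K̄`.  If `C = c ^ k`
for some `k ≥ 2` and `c ∈ K̄[x₁,…,x_{n+1}]`, then already `C = α·(c')^k` for
some `α ∈ K` and `c' ∈ K[x₁,…,x_{n+1}]`; i.e. a closed homogeneous polynomial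
stays closed over the algebraic closure. -/
theorem stmt15 {K : Type*} [Field K] [CharZero K] (n : ℕ)
    (Cp : MvPolynomial (Fin (n + 1)) K) (m : ℕ) (hhom : Cp.IsHomogeneous m)
    (hnc : Cp ∉ Set.range (MvPolynomial.C : K → MvPolynomial (Fin (n + 1)) K))
    (k : ℕ) (hk : 2 ≤ k)
    (c : MvPolynomial (Fin (n + 1)) (AlgebraicClosure K))
    (hc : MvPolynomial.map (algebraMap K (AlgebraicClosure K)) Cp = c ^ k) :
    ∃ (α : K) (c' : MvPolynomial (Fin (n + 1)) K),
      Cp = MvPolynomial.C α * c' ^ k :=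
  stmt15_general n Cp k hk c hc
end

section
/- For every C ∈ K[x₁,…,x_{n+1}], the n-ary bracket {f₁,…,fₙ} := J(f₁,…,fₙ,C) on K[x₁,…,x_{n+1}] satisfies the n-Lie (Filippov) Jacobi identity: for all u₁,…,uₙ, v₁,…,v_{n−1} ∈ K[x₁,…,x_{n+1}], J(J(u₁,…,uₙ,C), v₁,…,v_{n−1}, C) = Σ_{i=1}^{n} J(u₁,…,u_{i−1}, J(u_i, v₁,…,v_{n−1}, C), u_{i+1},…,uₙ, C). Hence P_C is an n-Lie-Poisson algebra. -/
/-!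
Fix `g` and a slot `i₀`. Expanding the determinant along row `i₀` shows that
`p ↦ J(g₁,…,p,…,g_N)` is the vector field `X = ∑ₖ aₖ ∂ₖ` whose coefficients are column `i₀`
of the adjugate of the Jacobian matrix of `g`. This field is divergence-free (Piola identity):
the other rows of that matrix are gradients, and `∑ₖ ∂ₖ aₖ` pairs the symmetric array of
second derivatives with an alternating one. Differentiating `J(f)` row by row gives, for any
field `X`, `∑ᵢ J(f₁,…,X fᵢ,…,f_N) = X (J f) + (div X) J f`, so a divergence-free `X` is a
derivation of the Jacobian. With `f = (u, C)` and `g = (·, v, C)` the summand containing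
`X C = J(C, v, C) = 0` vanishes, which leaves the Filippov identity.
-/

open MvPolynomial

theorem Finset.sum_sum_eq_zero_of_antisymm {ι M : Type*} [AddCommGroup M] (s : Finset ι)
    (f : ι → ι → M) (hdiag : ∀ i, f i i = 0) (hswap : ∀ i j, f j i = -f i j) :
    ∑ i ∈ s, ∑ j ∈ s, f i j = 0 := by
  rw [← Finset.sum_product' s s f]
  refine Finset.sum_involution (fun x _ => x.swap) (fun x _ => ?_) (fun ⟨i, j⟩ _ hf hij => ?_)
    (fun x hx => Finset.mem_product.2 (Finset.mem_product.1 hx).symm) (fun x _ => x.swap_swap)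
  · rw [Prod.fst_swap, Prod.snd_swap, hswap x.1 x.2, add_neg_cancel]
  · obtain rfl : j = i := congrArg Prod.fst hij
    exact hf (hdiag _)

theorem Matrix.det_updateRow_eq_sum_adjugate_mul {R n : Type*} [CommRing R] [Fintype n]
    [DecidableEq n] (M : Matrix n n R) (i : n) (r : n → R) :
    (M.updateRow i r).det = ∑ j, M.adjugate j i * r j := by
  rw [← Matrix.det_transpose, ← Matrix.updateCol_transpose, ← Matrix.cramer_apply,
    Matrix.cramer_eq_adjugate_mulVec, ← Matrix.adjugate_transpose]
  rfl

section Derivation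

variable {R A : Type*} [CommRing R] [CommRing A] [Algebra R A] (D : Derivation R A A)

theorem Derivation.leibniz_finset_prod {ι : Type*} [DecidableEq ι] (s : Finset ι) (f : ι → A) :
    D (∏ i ∈ s, f i) = ∑ i ∈ s, ∏ j ∈ s, Function.update f i (D (f i)) j := by
  induction s using Finset.induction_on with
  | empty => simp
  | insert a s ha ih =>
    rw [Finset.prod_insert ha, D.leibniz, ih, Finset.sum_insert ha, Finset.prod_insert ha,
      Function.update_self,
      Finset.prod_congr rfl fun j hj => Function.update_of_ne (ne_of_mem_of_not_mem hj ha) _ _,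
      smul_eq_mul, smul_eq_mul, Finset.mul_sum, add_comm, mul_comm]
    congr 1
    refine Finset.sum_congr rfl fun i hi => ?_
    rw [Finset.prod_insert ha, Function.update_of_ne (ne_of_mem_of_not_mem hi ha).symm]

theorem Derivation.map_det {n : Type*} [Fintype n] [DecidableEq n] (M : Matrix n n A) :
    D M.det = ∑ i, (M.updateRow i fun j => D (M i j)).det := by
  simp only [← M.det_transpose, ← Matrix.det_transpose (M.updateRow _ _), Matrix.det_apply,
    map_sum, Matrix.transpose_apply]
  rw [Finset.sum_comm]
  refine Finset.sum_congr rfl fun σ _ => ?_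
  rw [← Finset.smul_sum, Units.smul_def, Units.smul_def, map_zsmul, D.leibniz_finset_prod]
  congr 1
  refine Finset.sum_congr rfl fun i _ => Finset.prod_congr rfl fun j _ => ?_
  rcases eq_or_ne j i with rfl | hji
  · simp
  · simp [hji]

theorem Derivation.map_det_eq_sum_adjugate_mul {n : Type*} [Fintype n] [DecidableEq n]
    (M : Matrix n n A) : D M.det = ∑ i, ∑ j, M.adjugate j i * D (M i j) := by
  simp only [D.map_det, Matrix.det_updateRow_eq_sum_adjugate_mul]

end Derivation

theorem MvPolynomial.pderiv_pderiv_comm {R σ : Type*} [CommRing R] (i j : σ)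
    (p : MvPolynomial σ R) : pderiv i (pderiv j p) = pderiv j (pderiv i p) := by
  classical
  have h : ⁅pderiv i, pderiv j⁆ = (0 : Derivation R (MvPolynomial σ R) (MvPolynomial σ R)) :=
    derivation_ext fun k => by
      rw [Derivation.commutator_apply, pderiv_X, pderiv_X]
      simp [Pi.single_apply, apply_ite]
  have := congr($h p)
  rwa [Derivation.commutator_apply, Derivation.zero_apply, sub_eq_zero] at this

section Jacobian

variable {R : Type*} [CommRing R]

noncomputable def jacobian {n : Type*} (f : n → MvPolynomial n R) : Matrix n n (MvPolynomial n R) :=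
  Matrix.of fun i j => pderiv j (f i)

theorem jacobian_update {n : Type*} [DecidableEq n] (f : n → MvPolynomial n R) (i : n)
    (p : MvPolynomial n R) :
    jacobian (Function.update f i p) = (jacobian f).updateRow i fun j => pderiv j p := by
  ext k j
  rcases eq_or_ne k i with rfl | hki
  · simp [jacobian]
  · simp [jacobian, hki]

variable {N : ℕ}

theorem jac_eq_det_jacobian (f : Fin N → MvPolynomial (Fin N) R) : jac f = (jacobian f).det :=
  rfl

theorem jac_update_X (f : Fin N → MvPolynomial (Fin N) R) (i k : Fin N) :
    jac (Function.update f i (X k)) = (jacobian f).adjugate k i := by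
  rw [jac_eq_det_jacobian, jacobian_update, Matrix.adjugate_apply]
  congr
  funext j
  rw [pderiv_X, Pi.single_comm]

theorem jac_update_eq_sum (f : Fin N → MvPolynomial (Fin N) R) (i : Fin N)
    (p : MvPolynomial (Fin N) R) :
    jac (Function.update f i p) = ∑ k, (jacobian f).adjugate k i * pderiv k p := by
  rw [jac_eq_det_jacobian, jacobian_update, Matrix.det_updateRow_eq_sum_adjugate_mul]

theorem jac_eq_zero_of_eq {f : Fin N → MvPolynomial (Fin N) R} {i j : Fin N} (hij : i ≠ j)
    (h : f i = f j) : jac f = 0 :=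
  Matrix.det_zero_of_row_eq hij (funext fun k => by simp [h])

theorem jac_comp_swap (f : Fin N → MvPolynomial (Fin N) R) {i j : Fin N} (hij : i ≠ j) :
    jac (f ∘ Equiv.swap i j) = -jac f := by
  have := Matrix.det_permute (Equiv.swap i j) (jacobian f)
  rwa [Equiv.Perm.sign_swap hij, Units.val_neg, Units.val_one, Int.cast_neg, Int.cast_one,
    neg_one_mul] at this

theorem jac_update_update_swap (f : Fin N → MvPolynomial (Fin N) R) {i j : Fin N} (hij : i ≠ j)
    (p q : MvPolynomial (Fin N) R) :
    jac (Function.update (Function.update f i q) j p) =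
      -jac (Function.update (Function.update f i p) j q) := by
  rw [← jac_comp_swap _ hij]
  congr 1
  funext k
  simp only [Function.comp_apply, Function.update_apply, Equiv.swap_apply_def]
  split_ifs <;> simp_all

theorem sum_pderiv_adjugate_jacobian (f : Fin N → MvPolynomial (Fin N) R) (i : Fin N) :
    ∑ k, pderiv k ((jacobian f).adjugate k i) = 0 := by
  simp only [← jac_update_X, jac_eq_det_jacobian, Derivation.map_det_eq_sum_adjugate_mul]
  rw [Finset.sum_comm]
  refine Finset.sum_eq_zero fun r _ => ?_
  -- Row `i` of each matrix is the constant `∇ Xₖ`; any other row `r` pairs the symmetric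
  -- `∂ₖ∂ₗ f r` with minors alternating in `(k, l)`.
  rcases eq_or_ne r i with rfl | hri
  · simp [jacobian, pderiv_X, Pi.single_apply, apply_ite]
  · have hrow (k l : Fin N) : jacobian (Function.update f i (X k)) r l = pderiv l (f r) := by
      simp [jacobian, hri]
    simp only [hrow, ← jac_eq_det_jacobian]
    refine Finset.sum_sum_eq_zero_of_antisymm _ _ (fun k => ?_) (fun k l => ?_)
    · rw [jac_eq_zero_of_eq hri.symm (by simp [hri.symm]), zero_mul]
    · rw [jac_update_update_swap _ hri.symm, pderiv_pderiv_comm, neg_mul]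

theorem sum_jac_update_sum_mul_pderiv (f a : Fin N → MvPolynomial (Fin N) R) :
    ∑ i, jac (Function.update f i (∑ k, a k * pderiv k (f i))) =
      ∑ k, a k * pderiv k (jac f) + (∑ k, pderiv k (a k)) * jac f := by
  have hgrad (i l : Fin N) : pderiv l (∑ k, a k * pderiv k (f i)) =
      ∑ k, (pderiv l (a k) * jacobian f i k + a k * pderiv k (jacobian f i l)) := by
    simp only [map_sum, pderiv_mul, jacobian, Matrix.of_apply, pderiv_pderiv_comm l]
  simp only [jac_update_eq_sum, hgrad]
  rw [jac_eq_det_jacobian]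
  generalize jacobian f = M
  have hadj (l k : Fin N) : ∑ i, M.adjugate l i * M i k = if l = k then M.det else 0 := by
    rw [← Matrix.mul_apply, Matrix.adjugate_mul, Matrix.smul_apply, Matrix.one_apply, smul_ite,
      smul_eq_mul, mul_one, smul_zero]
  calc ∑ i, ∑ l, M.adjugate l i * ∑ k, (pderiv l (a k) * M i k + a k * pderiv k (M i l))
      = ∑ k, ∑ l, pderiv l (a k) * ∑ i, M.adjugate l i * M i k
          + ∑ k, a k * ∑ i, ∑ l, M.adjugate l i * pderiv k (M i l) := by
        simp only [Finset.mul_sum, mul_add, Finset.sum_add_distrib]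
        refine congrArg₂ (· + ·) ?_ ?_
        · rw [Finset.sum_comm]
          refine (Finset.sum_congr rfl fun l _ => Finset.sum_comm).trans (Finset.sum_comm.trans ?_)
          exact Finset.sum_congr rfl fun k _ => Finset.sum_congr rfl fun l _ =>
            Finset.sum_congr rfl fun i _ => by ring
        · refine (Finset.sum_congr rfl fun i _ => Finset.sum_comm).trans (Finset.sum_comm.trans ?_)
          exact Finset.sum_congr rfl fun k _ => Finset.sum_congr rfl fun i _ =>
            Finset.sum_congr rfl fun l _ => by ring
    _ = _ := by
        simp only [hadj, mul_ite, mul_zero, Finset.sum_ite_eq', Finset.mem_univ, if_true,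
          ← Derivation.map_det_eq_sum_adjugate_mul, ← Finset.sum_mul]
        ring

theorem jac_update_jac (f g : Fin N → MvPolynomial (Fin N) R) (i₀ : Fin N) :
    jac (Function.update g i₀ (jac f)) =
      ∑ i, jac (Function.update f i (jac (Function.update g i₀ (f i)))) := by
  simp only [jac_update_eq_sum g i₀]
  rw [sum_jac_update_sum_mul_pderiv, sum_pderiv_adjugate_jacobian, zero_mul, add_zero]

end Jacobian

/-- Here `n = m + 2` and the polynomial ring has `n + 1 = m + 3` variables. -/
theorem stmt17_general {K : Type*} [Field K] (m : ℕ)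
    (Cp : MvPolynomial (Fin (m + 3)) K)
    (u : Fin (m + 2) → MvPolynomial (Fin (m + 3)) K)
    (v : Fin (m + 1) → MvPolynomial (Fin (m + 3)) K) :
    jac (Fin.cons (jac (Fin.snoc u Cp)) (Fin.snoc v Cp)) =
      ∑ i : Fin (m + 2),
        jac (Fin.snoc
          (Function.update u i (jac (Fin.snoc (Fin.cons (u i) v) Cp))) Cp) := by
  have hcons (p : MvPolynomial (Fin (m + 3)) K) :
      (Fin.cons p (Fin.snoc v Cp) : Fin (m + 3) → MvPolynomial (Fin (m + 3)) K) =
        Function.update (Fin.cons 0 (Fin.snoc v Cp)) 0 p := by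
    rw [Fin.update_cons_zero]
  have hCp : jac (Fin.cons Cp (Fin.snoc v Cp)) = 0 :=
    jac_eq_zero_of_eq (j := Fin.last _) Fin.last_pos.ne (by
      rw [Fin.cons_zero, ← Fin.succ_last, Fin.cons_succ, Fin.snoc_last])
  have hzero : jac (Function.update (Fin.snoc u Cp) (Fin.last _) 0) = 0 := by
    simp only [jac_update_eq_sum, map_zero, mul_zero, Finset.sum_const_zero]
  rw [hcons, jac_update_jac, Fin.sum_univ_castSucc]
  simp only [← hcons]
  rw [Fin.snoc_last, hCp, hzero, add_zero]
  refine Finset.sum_congr rfl fun i _ => ?_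
  rw [Fin.snoc_castSucc, Fin.cons_snoc_eq_snoc_cons, Fin.snoc_update]

/-- Here `n = m + 2 ≥ 2` and the polynomial ring has `n + 1 = m + 3` variables.
For every `C`, the `n`-ary bracket `{f₁,…,fₙ} = J(f₁,…,fₙ,C)` satisfies the
`n`-Lie (Filippov) Jacobi identity:
`{{u₁,…,uₙ},v₁,…,v_{n-1}} = Σᵢ {u₁,…,u_{i-1},{uᵢ,v₁,…,v_{n-1}},u_{i+1},…,uₙ}`. -/
theorem stmt17 {K : Type*} [Field K] [CharZero K] (m : ℕ)
    (Cp : MvPolynomial (Fin (m + 3)) K)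
    (u : Fin (m + 2) → MvPolynomial (Fin (m + 3)) K)
    (v : Fin (m + 1) → MvPolynomial (Fin (m + 3)) K) :
    jac (Fin.cons (jac (Fin.snoc u Cp)) (Fin.snoc v Cp)) =
      ∑ i : Fin (m + 2),
        jac (Fin.snoc
          (Function.update u i (jac (Fin.snoc (Fin.cons (u i) v) Cp))) Cp) :=
  stmt17_general m Cp u v
end
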